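/- arXiv:math/0504154 — 2 statements merged into one kernel-verified Lean document; each statement's English description precedes it below -/
import Mathlib

section
/- Let (A,1) be a matrix order unit space and K = (K_n) a matrix metric set of (A,1). Then for every n and all φ,ψ ∈ CS_n(A), sup{‖⟪φ,a⟫ − ⟪ψ,a⟫‖ : a ∈ K_r, r ∈ ℕ} = sup{‖⟪φ,a⟫ − ⟪ψ,a⟫‖ : a ∈ K_n}; that is, in the definition of D_{K_n} the supremum over all levels r may be replaced by the supremum over level n alone. -/
open scoped ComplexOrder Matrix.Norms.L2Operator
open Matrix

noncomputable section

abbrev Mat (n : ℕ) (R : Type*) := Matrix (Fin n) (Fin n) R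

variable {B : Type*} [NormedRing B] [StarRing B] [CStarRing B] [NormedAlgebra ℂ B]
  [StarModule ℂ B] [CompleteSpace B]

variable {A : Submodule ℂ B}

/-- The matrix of representatives in `B` of a matrix over the subspace `A`. -/
def mval {r : ℕ} (a : Mat r ↥A) : Mat r B := Matrix.of fun i j => (a i j : B)

/-- Positivity in a matrix algebra over the C*-algebra `B`. -/
def MatPos {ι : Type*} [Fintype ι] (x : Matrix ι ι B) : Prop := ∃ b : Matrix ι ι B, x = bᴴ * b

/-- The matrix pairing `⟪φ, a⟫ = [φ(a_ij)] ∈ M_r(M_n(ℂ))`. -/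
def pairing {n r : ℕ} (φ : ↥A →ₗ[ℂ] Mat n ℂ) (a : Mat r ↥A) :
    Matrix (Fin r × Fin n) (Fin r × Fin n) ℂ :=
  Matrix.of fun p q => φ (a p.1 q.1) p.2 q.2

/-- A matrix state at level `n`: a unital completely positive linear map `A → M_n(ℂ)`. -/
def IsMatrixState (h1 : (1 : B) ∈ A) {n : ℕ} (φ : ↥A →ₗ[ℂ] Mat n ℂ) : Prop :=
  φ ⟨1, h1⟩ = 1 ∧ ∀ (r : ℕ) (a : Mat r ↥A), MatPos (mval a) → (pairing φ a).PosSemidef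

/-- The norm on `M_n(A)` determined by the matrix order:
`‖a‖_n = inf {t | [[t1, a], [a*, t1]] ≥ 0}`. -/
def matNorm {n : ℕ} (a : Mat n ↥A) : ℝ :=
  sInf {t : ℝ | MatPos (Matrix.fromBlocks (t • (1 : Mat n B)) (mval a) (mval a)ᴴ (t • 1))}

/-- The star operation on `A` (given that `A` is self-adjoint). -/
def starA (hstar : ∀ a ∈ A, star a ∈ A) (a : ↥A) : ↥A := ⟨star (a : B), hstar _ a.2⟩

/-- The adjoint of a matrix over `A`. -/
def starMat (hstar : ∀ a ∈ A, star a ∈ A) {n : ℕ} (a : Mat n ↥A) : Mat n ↥A :=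
  Matrix.of fun i j => starA hstar (a j i)

/-- The direct sum `a ⊕ b` of square matrices. -/
def dSum {V : Type*} [Zero V] {m n : ℕ} (a : Mat m V) (b : Mat n V) : Mat (m + n) V :=
  Matrix.reindex finSumFinEquiv finSumFinEquiv (Matrix.fromBlocks a 0 0 b)

/-- The product `α a β` of a matrix over a ℂ-module by scalar matrices. -/
def matAct {V : Type*} [AddCommMonoid V] [Module ℂ V] {m n : ℕ}
    (α : Matrix (Fin n) (Fin m) ℂ) (a : Mat m V) (β : Matrix (Fin m) (Fin n) ℂ) : Mat n V :=
  Matrix.of fun i j => ∑ k, ∑ l, (α i k * β l j) • a k l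

/-- A matrix metric set of the matrix order unit space `(A, 1)`: a graded set which is norm
compact, self-adjoint, absolutely matrix convex, and separates the matrix states. -/
structure IsMatrixMetricSet (h1 : (1 : B) ∈ A) (hstar : ∀ a ∈ A, star a ∈ A)
    (K : ∀ r : ℕ, Set (Mat r ↥A)) : Prop where
  compact : ∀ r, IsCompact (K r)
  star_mem : ∀ r, ∀ a ∈ K r, starMat hstar a ∈ K r
  dsum_mem : ∀ m n, ∀ a ∈ K m, ∀ b ∈ K n, dSum a b ∈ K (m + n)
  act_mem : ∀ m n (α : Matrix (Fin n) (Fin m) ℂ) (β : Matrix (Fin m) (Fin n) ℂ),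
    ‖α‖ ≤ 1 → ‖β‖ ≤ 1 → ∀ a ∈ K m, matAct α a β ∈ K n
  separates : ∀ n (φ ψ : ↥A →ₗ[ℂ] Mat n ℂ), IsMatrixState h1 φ → IsMatrixState h1 ψ →
    φ ≠ ψ → ∃ r, ∃ a ∈ K r, pairing φ a ≠ pairing ψ a

/-- The metric `D_{K_n}` on the matrix state space. -/
def DK (K : ∀ r : ℕ, Set (Mat r ↥A)) {n : ℕ} (φ ψ : ↥A →ₗ[ℂ] Mat n ℂ) : ℝ :=
  sSup {x : ℝ | ∃ r, ∃ a ∈ K r, x = ‖pairing φ a - pairing ψ a‖}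

/-- A scalar matrix `[α_ij 1] ∈ M_n(ℂ1)`. -/
def scalarMat (h1 : (1 : B) ∈ A) {n : ℕ} (α : Mat n ℂ) : Mat n ↥A :=
  Matrix.of fun i j => α i j • (⟨1, h1⟩ : ↥A)

/-- Condition (1): each `S_n` is norm relatively compact in `M_n(A)`. -/
def Cond1 (S : ∀ n : ℕ, Set (Mat n ↥A)) : Prop := ∀ n, IsCompact (closure (S n))

/-- Condition (2): each family `Ŝ_n` is bounded and equicontinuous with respect to the
matrix metric `D_K` on the matrix state space and the norm metrics on matrices. -/
def Cond2 (h1 : (1 : B) ∈ A) (K : ∀ r : ℕ, Set (Mat r ↥A)) (S : ∀ n : ℕ, Set (Mat n ↥A)) :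
    Prop := ∀ n : ℕ,
  (∃ C > (0 : ℝ), ∀ a ∈ S n, ∀ (r : ℕ) (φ : ↥A →ₗ[ℂ] Mat r ℂ), IsMatrixState h1 φ →
      ‖pairing φ a‖ ≤ C)
  ∧ ∀ ε > (0 : ℝ), ∀ (r : ℕ) (φ : ↥A →ₗ[ℂ] Mat r ℂ), IsMatrixState h1 φ →
      ∃ δ > (0 : ℝ), ∀ a ∈ S n, ∀ ψ : ↥A →ₗ[ℂ] Mat r ℂ, IsMatrixState h1 ψ →
        DK K φ ψ < δ → ‖pairing φ a - pairing ψ a‖ < ε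

/-- Condition (3): each `S_n` is norm bounded, and for every `ε > 0` there is a sequence
`(λ_n)` of positive reals with `S_n ⊆ A_{n,ε} + λ_n K_n + M_n(ℂ1)` for every `n`. -/
def Cond3 (h1 : (1 : B) ∈ A) (K : ∀ r : ℕ, Set (Mat r ↥A)) (S : ∀ n : ℕ, Set (Mat n ↥A)) :
    Prop :=
  (∀ n, ∃ C : ℝ, ∀ a ∈ S n, matNorm a ≤ C)
  ∧ ∀ ε : ℝ, 0 < ε → ∃ lam : ℕ → ℝ, (∀ n, 0 < lam n) ∧
      ∀ n, ∀ a ∈ S n, ∃ b c d : Mat n ↥A, matNorm b ≤ ε ∧ c ∈ K n ∧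
        (∃ α : Mat n ℂ, d = scalarMat h1 α) ∧ a = b + ((lam n : ℂ)) • c + d

/-!
Write `ξ ∈ ℂ^r ⊗ ℂ^n` as an `r × n` matrix `Ξ`. The polar decomposition `Ξ = β |Ξ|`, with `β` a
contraction, gives `ξ = (β ⊗ 1) v` where `v ∈ ℂ^n ⊗ ℂ^n` corresponds to `|Ξ|` and `‖v‖ = ‖ξ‖`.
Factoring both vectors of `⟪X ξ, η⟫` in this way shows that the norm of any
`X ∈ M_r(M_n)` is the supremum of the norms of its compressions `(α ⊗ 1) X (β ⊗ 1) ∈ M_n(M_n)`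
by contractions `α ∈ M_{n,r}`, `β ∈ M_{r,n}`. Compressing `⟪φ, a⟫ - ⟪ψ, a⟫` by `α, β` gives
`⟪φ, α a β⟫ - ⟪ψ, α a β⟫`, and `α a β ∈ K_n` by absolute matrix convexity.
-/

open scoped Kronecker InnerProductSpace

namespace Matrix

variable {𝕜 : Type*} [RCLike 𝕜] {l m n : Type*} [Fintype m]

theorem conjTranspose_mul_self_apply_self (M : Matrix m n 𝕜) (j : n) :
    (Mᴴ * M) j j = ((∑ i, ‖M i j‖ ^ 2 : ℝ) : 𝕜) := by
  simp [mul_apply, RCLike.conj_mul]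

variable [Fintype l] [Fintype n]

theorem l2_opNorm_le_one_of_isStarProjection_conjTranspose_mul_self [DecidableEq n]
    {β : Matrix m n 𝕜} (h : IsStarProjection (βᴴ * β)) : ‖β‖ ≤ 1 := by
  have hle := h.norm_le
  rw [l2_opNorm_conjTranspose_mul_self] at hle
  nlinarith [norm_nonneg β]

theorem cfc_mul_cfc [DecidableEq n] (P : Matrix n n 𝕜) (f g : ℝ → ℝ) :
    cfc f P * cfc g P = cfc (fun x => f x * g x) P :=
  (cfc_mul f g P (P.finite_real_spectrum.continuousOn f)
    (P.finite_real_spectrum.continuousOn g)).symm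

theorem exists_contraction_mul_eq [DecidableEq n] (Ξ : Matrix m n 𝕜) :
    ∃ (β : Matrix m n 𝕜) (V : Matrix n n 𝕜), ‖β‖ ≤ 1 ∧ β * V = Ξ ∧ Vᴴ * V = Ξᴴ * Ξ := by
  have hP : (Ξᴴ * Ξ).PosSemidef := posSemidef_conjTranspose_mul_self Ξ
  generalize hPdef : Ξᴴ * Ξ = P at hP
  have hstar (f : ℝ → ℝ) : (cfc f P)ᴴ = cfc f P := (cfc_predicate f P).star_eq
  have hPsa : IsSelfAdjoint P := hP.1
  have hid : cfc id P = P := cfc_id ℝ P hPsa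
  have hnonneg : ∀ x ∈ spectrum ℝ P, 0 ≤ x := by
    open scoped MatrixOrder in exact fun _ hx => spectrum_nonneg_of_nonneg hP.nonneg hx
  -- `V = P^{1/2}`, `W` is its Moore–Penrose inverse and `E` the projection onto `ker P`
  let V := cfc Real.sqrt P
  let W := cfc (fun x => (√x)⁻¹) P
  let E := cfc (fun x => 1 - (√x)⁻¹ * √x) P
  have hVV : V * V = P := by
    rw [cfc_mul_cfc]
    conv_rhs => rw [← hid]
    exact cfc_congr fun x hx => Real.mul_self_sqrt (hnonneg x hx)
  have hWV : W * V = 1 - E := by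
    rw [cfc_mul_cfc, eq_sub_iff_add_eq, ← cfc_add _ _ _ (P.finite_real_spectrum.continuousOn _)
      (P.finite_real_spectrum.continuousOn _), cfc_congr (g := fun _ => 1) (fun x _ => by ring),
      cfc_const_one ℝ P hPsa]
  have hVW : V * W = 1 - E := by
    rw [← hWV, cfc_mul_cfc, cfc_mul_cfc]
    simp only [mul_comm]
  have hE : IsStarProjection E := by
    refine ⟨?_, cfc_predicate _ P⟩
    rw [IsIdempotentElem, cfc_mul_cfc]
    refine cfc_congr fun x _ => ?_
    rcases eq_or_ne (√x) 0 with h | h <;> simp [h]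
  have hΞE : Ξ * E = 0 := by
    have hEPE : E * P * E = 0 := by
      rw [← hid, cfc_mul_cfc, cfc_mul_cfc, ← cfc_zero ℝ P]
      refine cfc_congr fun x hx => ?_
      rcases (hnonneg x hx).eq_or_lt with rfl | hx0
      · simp
      · simp [(Real.sqrt_pos.2 hx0).ne']
    have hEs : Eᴴ = E := hstar _
    rw [← conjTranspose_mul_self_eq_zero, ← hEPE, ← hPdef, conjTranspose_mul, hEs]
    simp only [Matrix.mul_assoc]
  refine ⟨Ξ * W, V, l2_opNorm_le_one_of_isStarProjection_conjTranspose_mul_self ?_, ?_,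
    by rw [hstar, hVV]⟩
  · have hWs : Wᴴ = W := hstar _
    have hββ : (Ξ * W)ᴴ * (Ξ * W) = 1 - E :=
      calc (Ξ * W)ᴴ * (Ξ * W) = (W * V) * (V * W) := by
            rw [conjTranspose_mul, hWs, Matrix.mul_assoc, ← Matrix.mul_assoc Ξᴴ, hPdef, ← hVV]
            simp only [Matrix.mul_assoc]
        _ = 1 - E := by rw [hWV, hVW, hE.one_sub.isIdempotentElem.eq]
    exact hββ ▸ hE.one_sub
  · rw [Matrix.mul_assoc, hWV, Matrix.mul_sub, hΞE, Matrix.mul_one, sub_zero]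

theorem norm_toLp_vec_transpose_eq_of_conjTranspose_mul_self_eq {M : Matrix l n 𝕜}
    {N : Matrix m n 𝕜} (h : Mᴴ * M = Nᴴ * N) :
    ‖WithLp.toLp 2 (vec Mᵀ)‖ = ‖WithLp.toLp 2 (vec Nᵀ)‖ := by
  have hcol (j : n) : ∑ i, ‖M i j‖ ^ 2 = ∑ i, ‖N i j‖ ^ 2 := by
    exact_mod_cast (conjTranspose_mul_self_apply_self M j).symm.trans
      (congrFun (congrFun h j) j |>.trans (conjTranspose_mul_self_apply_self N j))
  simp only [EuclideanSpace.norm_eq, Fintype.sum_prod_type, vec, transpose_apply]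
  rw [Finset.sum_comm, Finset.sum_congr rfl fun j _ => hcol j, Finset.sum_comm]

theorem exists_toEuclideanLin_kronecker_one_eq [DecidableEq n] (x : EuclideanSpace 𝕜 (m × n)) :
    ∃ (β : Matrix m n 𝕜) (v : EuclideanSpace 𝕜 (n × n)),
      ‖β‖ ≤ 1 ∧ ‖v‖ = ‖x‖ ∧ toEuclideanLin (β ⊗ₖ (1 : Matrix n n 𝕜)) v = x := by
  obtain ⟨β, V, hβ, hβV, hV⟩ := exists_contraction_mul_eq (of fun i j => x (i, j))
  refine ⟨β, WithLp.toLp 2 (vec Vᵀ), hβ,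
    by rw [norm_toLp_vec_transpose_eq_of_conjTranspose_mul_self_eq hV]; rfl, ?_⟩
  rw [toLpLin_toLp, toLin'_apply, kronecker_mulVec_vec, Matrix.one_mul, ← transpose_mul, hβV]
  rfl

theorem l2_opNorm_le_of_kronecker_one_compressions_le [DecidableEq l] [DecidableEq m]
    [DecidableEq n] (X : Matrix (l × n) (m × n) 𝕜) {C : ℝ}
    (h : ∀ (α : Matrix n l 𝕜) (β : Matrix m n 𝕜), ‖α‖ ≤ 1 → ‖β‖ ≤ 1 →
      ‖(α ⊗ₖ (1 : Matrix n n 𝕜)) * X * (β ⊗ₖ (1 : Matrix n n 𝕜))‖ ≤ C) :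
    ‖X‖ ≤ C := by
  have hC : 0 ≤ C := (norm_nonneg _).trans (h 0 0 (by simp) (by simp))
  rw [l2_opNorm_def]
  refine ContinuousLinearMap.opNorm_le_of_re_inner_le hC fun x y hx hy => ?_
  obtain ⟨β, v, hβ, hv, rfl⟩ := exists_toEuclideanLin_kronecker_one_eq x
  obtain ⟨γ, w, hγ, hw, rfl⟩ := exists_toEuclideanLin_kronecker_one_eq y
  set Y := (γᴴ ⊗ₖ (1 : Matrix n n 𝕜)) * X * (β ⊗ₖ (1 : Matrix n n 𝕜))
  have hY : ‖Y‖ ≤ C := h γᴴ β (by rwa [l2_opNorm_conjTranspose]) hβ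
  have hinner : ⟪toEuclideanLin X (toEuclideanLin (β ⊗ₖ 1) v), toEuclideanLin (γ ⊗ₖ 1) w⟫_𝕜
      = ⟪toEuclideanLin Y v, w⟫_𝕜 := by
    rw [← LinearMap.adjoint_inner_left, ← toEuclideanLin_conjTranspose_eq_adjoint]
    simp only [Y, conjTranspose_kronecker, conjTranspose_one, toLpLin_mul_same,
      LinearMap.comp_apply]
  simp only [LinearEquiv.trans_apply, LinearMap.coe_toContinuousLinearMap']
  rw [hinner]
  calc RCLike.re ⟪toEuclideanLin Y v, w⟫_𝕜 ≤ ‖toEuclideanLin Y v‖ * ‖w‖ :=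
        (RCLike.re_le_norm _).trans (norm_inner_le_norm _ _)
    _ ≤ ‖Y‖ * ‖v‖ * ‖w‖ := by gcongr; exact l2_opNorm_mulVec Y v
    _ ≤ C := by rw [hv, hw, hx, hy, mul_one, mul_one]; exact hY

end Matrix

theorem Real.sSup_eq_sSup_of_upperBounds_eq {s t : Set ℝ} (h : upperBounds s = upperBounds t) :
    sSup s = sSup t := by
  have hbdd : BddAbove s ↔ BddAbove t := by simp only [BddAbove, h]
  by_cases hs : BddAbove s
  · rcases s.eq_empty_or_nonempty with rfl | hsne
    · have ht : t = ∅ := by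
        refine Set.eq_empty_of_forall_notMem fun x hx => ?_
        have : x - 1 ∈ upperBounds t := by rw [← h, upperBounds_empty]; trivial
        linarith [this hx]
      rw [ht]
    · have htne : t.Nonempty := by
        by_contra! ht
        obtain ⟨x, hx⟩ := hsne
        have : x - 1 ∈ upperBounds s := by rw [h, ht, upperBounds_empty]; trivial
        linarith [this hx]
      exact (isLUB_csSup hsne hs).unique ((isLUB_congr h).2 (isLUB_csSup htne (hbdd.1 hs)))
  · rw [Real.sSup_of_not_bddAbove hs, Real.sSup_of_not_bddAbove (mt hbdd.2 hs)]

theorem pairing_matAct {B : Type*} [NormedRing B] [NormedAlgebra ℂ B] {A : Submodule ℂ B}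
    {n k m : ℕ} (φ : ↥A →ₗ[ℂ] Mat n ℂ) (α : Matrix (Fin k) (Fin m) ℂ)
    (a : Mat m ↥A) (β : Matrix (Fin m) (Fin k) ℂ) :
    pairing φ (matAct α a β) = (α ⊗ₖ (1 : Mat n ℂ)) * pairing φ a * (β ⊗ₖ (1 : Mat n ℂ)) := by
  ext ⟨i, s⟩ ⟨j, t⟩
  simp only [pairing, matAct, of_apply, map_sum, map_smul, Matrix.sum_apply, Matrix.smul_apply,
    smul_eq_mul, mul_apply, kroneckerMap_apply, one_apply, mul_ite, mul_one, mul_zero, ite_mul,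
    zero_mul, Fintype.sum_prod_type, Finset.sum_ite_eq, Finset.sum_ite_eq', Finset.mem_univ,
    if_true, Finset.sum_mul]
  rw [Finset.sum_comm]
  exact Finset.sum_congr rfl fun _ _ => Finset.sum_congr rfl fun _ _ => by ring

theorem DK_eq_sup_level_n_general
    (h1 : (1 : B) ∈ A) (hstar : ∀ a ∈ A, star a ∈ A)
    (K : ∀ r : ℕ, Set (Mat r ↥A)) (hK : IsMatrixMetricSet h1 hstar K)
    (n : ℕ) (φ ψ : ↥A →ₗ[ℂ] Mat n ℂ) :
    DK K φ ψ = sSup {x : ℝ | ∃ a ∈ K n, x = ‖pairing φ a - pairing ψ a‖} := by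
  refine Real.sSup_eq_sSup_of_upperBounds_eq (subset_antisymm (upperBounds_mono_set ?_) ?_)
  · rintro - ⟨a, ha, rfl⟩
    exact ⟨n, a, ha, rfl⟩
  · rintro b hb - ⟨r, a, ha, rfl⟩
    refine Matrix.l2_opNorm_le_of_kronecker_one_compressions_le _ fun α β hα hβ => ?_
    rw [Matrix.mul_sub, Matrix.sub_mul, ← pairing_matAct, ← pairing_matAct]
    exact hb ⟨matAct α a β, hK.act_mem r n α β hα hβ a ha, rfl⟩

/-- **Corollary 4.3.** In the definition of `D_{K_n}` the supremum over all levels `r` may be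
replaced by the supremum over level `n` alone. -/
theorem DK_eq_sup_level_n
    (h1 : (1 : B) ∈ A) (hstar : ∀ a ∈ A, star a ∈ A) (hclosed : IsClosed (A : Set B))
    (K : ∀ r : ℕ, Set (Mat r ↥A)) (hK : IsMatrixMetricSet h1 hstar K)
    (n : ℕ) (φ ψ : ↥A →ₗ[ℂ] Mat n ℂ) (hφ : IsMatrixState h1 φ) (hψ : IsMatrixState h1 ψ) :
    DK K φ ψ = sSup {x : ℝ | ∃ a ∈ K n, x = ‖pairing φ a - pairing ψ a‖} :=
  DK_eq_sup_level_n_general h1 hstar K hK n φ ψ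
end
end

section
/- Let (A,1) be a matrix order unit space and K = (K_n) a matrix metric set of (A,1). Let S = (S_n), S_n ⊆ M_n(A), be a graded set such that each S_n is norm bounded and for every ε > 0 there exists a sequence (λ_n) of positive reals with S_n ⊆ {b ∈ M_n(A) : ‖b‖_n ≤ ε} + λ_n K_n + M_n(ℂ1) for every n, where M_n(ℂ1) = {[α_ij 1] : [α_ij] ∈ M_n(ℂ)}. Then each S_n is norm relatively compact in M_n(A). -/
open scoped ComplexOrder Matrix.Norms.L2Operator
open Matrix

noncomputable section

variable {B : Type*} [NormedRing B] [StarRing B] [CStarRing B] [NormedAlgebra ℂ B]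
  [StarModule ℂ B] [CompleteSpace B]

variable {A : Submodule ℂ B}

/-!
Entries of a matrix are bounded by its order norm: if `[[t, a], [a*, t]] = cᴴ c`, then `t` and
`a_ij` are `C⋆`-inner products of columns of `c` in the Hilbert module `Bᵏ`, so Cauchy–Schwarz
gives `‖a_ij‖ ≤ t`. Hence every neighbourhood of `0` contains the matrices of norm `≤ ε`, and in
a decomposition `a = b + λ c + d` of `a ∈ S_n` the scalar part `d` has uniformly bounded entries.
So `S_n` lies within `ε` of the compact set `λ K_n + {bounded scalar matrices}` for every `ε`: it is
totally bounded, and relatively compact because `A` is closed in the complete space `B`.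
-/

open Topology
open scoped Pointwise

theorem totallyBounded_of_forall_mem_nhds_zero_subset_add {G : Type*} [AddCommGroup G]
    [UniformSpace G] [IsUniformAddGroup G] {s : Set G}
    (h : ∀ U ∈ 𝓝 (0 : G), ∃ C : Set G, TotallyBounded C ∧ s ⊆ U + C) : TotallyBounded s := by
  rw [totallyBounded_iff_subset_finite_iUnion_nhds_zero]
  intro U hU
  obtain ⟨V, hV, hVU⟩ := exists_nhds_zero_half hU
  obtain ⟨C, hC, hsC⟩ := h V hV
  obtain ⟨t, ht, hCt⟩ := totallyBounded_iff_subset_finite_iUnion_nhds_zero.mp hC V hV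
  refine ⟨t, ht, fun x hx => ?_⟩
  obtain ⟨v, hv, c, hc, rfl⟩ := hsC hx
  obtain ⟨y, hy, w, hw, rfl⟩ := Set.mem_add.mp (by simpa using hCt hc)
  refine Set.mem_biUnion hy ⟨v + w, hVU v hv w hw, ?_⟩
  simp only [vadd_eq_add]
  abel

section CStarAlgebra

open WithCStarModule CStarModule

theorem IsSelfAdjoint.exists_algebraMap_norm_add_eq_star_mul_self {𝒜 : Type*} [CStarAlgebra 𝒜]
    {x : 𝒜} (hx : IsSelfAdjoint x) : ∃ c : 𝒜, algebraMap ℝ 𝒜 ‖x‖ + x = star c * c := by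
  let _ : PartialOrder 𝒜 := CStarAlgebra.spectralOrder 𝒜
  let _ : StarOrderedRing 𝒜 := CStarAlgebra.spectralOrderedRing 𝒜
  exact CStarAlgebra.nonneg_iff_eq_star_mul_self.mp
    (neg_le_iff_add_nonneg'.mp hx.neg_algebraMap_norm_le_self)

variable {𝒜 : Type*} [CStarAlgebra 𝒜] {ι κ : Type*} [Fintype κ]

theorem Matrix.IsHermitian.exists_smul_one_add_eq_conjTranspose_mul_self [Fintype ι]
    [DecidableEq ι] {x : Matrix ι ι 𝒜} (hx : x.IsHermitian) :
    ∃ t : ℝ, ∃ c : Matrix ι ι 𝒜, t • 1 + x = cᴴ * c := by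
  let _ : PartialOrder 𝒜 := CStarAlgebra.spectralOrder 𝒜
  let _ : StarOrderedRing 𝒜 := CStarAlgebra.spectralOrderedRing 𝒜
  obtain ⟨c, hc⟩ :=
    IsSelfAdjoint.exists_algebraMap_norm_add_eq_star_mul_self (x := CStarMatrix.ofMatrix x) hx
  rw [Algebra.algebraMap_eq_smul_one] at hc
  exact ⟨_, c, hc⟩

variable [PartialOrder 𝒜] [StarOrderedRing 𝒜]

-- `𝒜` is a right Hilbert module over itself, `⟪x, y⟫ = y * star x`: hence the conjugated columns.
theorem Matrix.conjTranspose_mul_self_apply_eq_inner (c : Matrix κ ι 𝒜) (p q : ι) :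
    (cᴴ * c) p q = inner 𝒜 ((WithCStarModule.equiv 𝒜 (κ → 𝒜)).symm fun k => star (c k q))
      ((WithCStarModule.equiv 𝒜 (κ → 𝒜)).symm fun k => star (c k p)) := by
  simp [pi_inner, inner_def, Matrix.mul_apply]

theorem Matrix.conjTranspose_mul_self_apply_self_nonneg (c : Matrix κ ι 𝒜) (p : ι) :
    0 ≤ (cᴴ * c) p p := by
  rw [conjTranspose_mul_self_apply_eq_inner]
  exact inner_self_nonneg

theorem Matrix.norm_conjTranspose_mul_self_apply_sq_le (c : Matrix κ ι 𝒜) (p q : ι) :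
    ‖(cᴴ * c) p q‖ ^ 2 ≤ ‖(cᴴ * c) p p‖ * ‖(cᴴ * c) q q‖ := by
  simp only [conjTranspose_mul_self_apply_eq_inner, ← norm_sq_eq, ← mul_pow]
  gcongr
  rw [mul_comm]
  exact norm_inner_le _

theorem Matrix.norm_apply_le_of_fromBlocks_eq_conjTranspose_mul_self [Nontrivial 𝒜]
    {m n : Type*} [DecidableEq m] [DecidableEq n] {t : ℝ} {a : Matrix m n 𝒜}
    {c : Matrix κ (m ⊕ n) 𝒜} (h : fromBlocks (t • 1) a aᴴ (t • 1) = cᴴ * c) (i : m) (j : n) :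
    ‖a i j‖ ≤ t := by
  have hdiag : ∀ p, (cᴴ * c) p p = t • 1 := by
    rintro (p | p) <;> simp [← h]
  have ht : 0 ≤ t := by
    have h0 := c.conjTranspose_mul_self_apply_self_nonneg (Sum.inl i)
    rw [hdiag] at h0
    rwa [← algebraMap_le_algebraMap (β := 𝒜), map_zero, Algebra.algebraMap_eq_smul_one]
  have hsq := c.norm_conjTranspose_mul_self_apply_sq_le (Sum.inl i) (Sum.inr j)
  rw [hdiag, hdiag, ← h, fromBlocks_apply₁₂, norm_smul, norm_one, mul_one, Real.norm_of_nonneg ht,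
    ← sq] at hsq
  exact le_of_sq_le_sq hsq ht

end CStarAlgebra

theorem IsCompact.exists_forall_norm_apply_le {E : Type*} [SeminormedAddCommGroup E]
    {m n : Type*} [Fintype m] [Fintype n] {K : Set (Matrix m n E)} (hK : IsCompact K) :
    ∃ R, ∀ c ∈ K, ∀ i j, ‖c i j‖ ≤ R := by
  obtain ⟨R, hR⟩ := hK.exists_bound_of_continuousOn (f := Matrix.of.symm)
    (continuous_pi fun i => continuous_pi fun j => continuous_id.matrix_elem i j).continuousOn
  exact ⟨R, fun c hc i j => ((norm_le_pi_norm (c i) j).trans (norm_le_pi_norm c i)).trans (hR c hc)⟩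

theorem norm_scalarMat_apply {B : Type*} [NormedRing B] [NormOneClass B] [NormedAlgebra ℂ B]
    {A : Submodule ℂ B} (h1 : (1 : B) ∈ A) {n : ℕ} (α : Mat n ℂ) (i j : Fin n) :
    ‖scalarMat h1 α i j‖ = ‖α i j‖ := by
  simp [scalarMat, norm_smul]

theorem isCompact_scalarMat_image {B : Type*} [NormedRing B] [NormedAlgebra ℂ B]
    {A : Submodule ℂ B} (h1 : (1 : B) ∈ A) {n : ℕ} (R : ℝ) :
    IsCompact (scalarMat h1 '' {α : Mat n ℂ | ∀ i j, ‖α i j‖ ≤ R}) := by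
  have hbox : {α : Mat n ℂ | ∀ i j, ‖α i j‖ ≤ R} =
      Set.univ.pi fun _ => Set.univ.pi fun _ => Metric.closedBall 0 R := by
    ext α
    exact ⟨fun h i _ j _ => mem_closedBall_zero_iff.mpr (h i j),
      fun h i j => mem_closedBall_zero_iff.mp (h i trivial j trivial)⟩
  rw [hbox]
  exact (isCompact_univ_pi fun _ => isCompact_univ_pi fun _ => isCompact_closedBall 0 R).image
    (continuous_pi fun i => continuous_pi fun j =>
      (continuous_apply_apply i j).smul continuous_const)

section MatNorm

variable {n : ℕ}

theorem norm_apply_le_matNorm [Nontrivial B] (b : Mat n ↥A) (i j : Fin n) :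
    ‖b i j‖ ≤ matNorm b := by
  let _ : CStarAlgebra B := {}
  let _ : PartialOrder B := CStarAlgebra.spectralOrder B
  let _ : StarOrderedRing B := CStarAlgebra.spectralOrderedRing B
  refine le_csInf ?_ fun t ⟨c, hc⟩ => norm_apply_le_of_fromBlocks_eq_conjTranspose_mul_self hc i j
  -- nonemptiness matters, as `sInf ∅ = 0`
  have hX : (fromBlocks 0 (mval b) (mval b)ᴴ 0 :
      Matrix (Fin n ⊕ Fin n) (Fin n ⊕ Fin n) B).IsHermitian := by
    simp [IsHermitian, fromBlocks_conjTranspose]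
  obtain ⟨t, c, hc⟩ := hX.exists_smul_one_add_eq_conjTranspose_mul_self
  refine ⟨t, c, ?_⟩
  rw [← hc, ← fromBlocks_one, fromBlocks_smul, fromBlocks_add]
  simp

theorem exists_setOf_matNorm_le_subset_of_mem_nhds [Nontrivial B] {U : Set (Mat n ↥A)}
    (hU : U ∈ 𝓝 0) : ∃ ε > 0, {b : Mat n ↥A | matNorm b ≤ ε} ⊆ U := by
  have hU' : U ∈ 𝓝 (0 : Fin n → Fin n → ↥A) := hU
  obtain ⟨δ, hδ, hδU⟩ := Metric.mem_nhds_iff.mp hU'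
  refine ⟨δ / 2, half_pos hδ, fun b hb => hδU (show Matrix.of.symm b ∈ Metric.ball 0 δ from ?_)⟩
  rw [mem_ball_zero_iff, pi_norm_lt_iff hδ]
  exact fun i => (pi_norm_lt_iff hδ).mpr fun j =>
    (norm_apply_le_matNorm b i j).trans_lt (hb.trans_lt (half_lt_self hδ))

theorem exists_isCompact_subset_setOf_matNorm_le_add [Nontrivial B] (h1 : (1 : B) ∈ A)
    {S K : Set (Mat n ↥A)} (hS : ∃ C, ∀ a ∈ S, matNorm a ≤ C) (hK : IsCompact K) {ε lam : ℝ}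
    (hdec : ∀ a ∈ S, ∃ b c d : Mat n ↥A, matNorm b ≤ ε ∧ c ∈ K ∧
      (∃ α : Mat n ℂ, d = scalarMat h1 α) ∧ a = b + (lam : ℂ) • c + d) :
    ∃ C, IsCompact C ∧ S ⊆ {b | matNorm b ≤ ε} + C := by
  obtain ⟨C₀, hC₀⟩ := hS
  obtain ⟨R, hR⟩ := hK.exists_forall_norm_apply_le
  refine ⟨(lam : ℂ) • K + scalarMat h1 '' {α | ∀ i j, ‖α i j‖ ≤ C₀ + ε + ‖lam‖ * R},
    (hK.smul _).add (isCompact_scalarMat_image h1 _), fun a ha => ?_⟩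
  obtain ⟨b, c, _, hb, hc, ⟨α, rfl⟩, rfl⟩ := hdec a ha
  refine ⟨b, hb, _, ⟨_, Set.smul_mem_smul_set hc, _, ⟨α, fun i j => ?_, rfl⟩, rfl⟩,
    (add_assoc _ _ _).symm⟩
  have hα : scalarMat h1 α i j =
      (b + (lam : ℂ) • c + scalarMat h1 α) i j - b i j - (lam : ℂ) • c i j := by
    simp only [Matrix.add_apply, Matrix.smul_apply]
    abel
  rw [← norm_scalarMat_apply h1 α i j, hα]
  calc _ ≤ ‖(b + (lam : ℂ) • c + scalarMat h1 α) i j‖ + ‖b i j‖ + ‖lam‖ * ‖c i j‖ := by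
        refine (norm_sub_le _ _).trans (add_le_add (norm_sub_le _ _) ?_)
        rw [norm_smul, Complex.norm_real]
    _ ≤ C₀ + ε + ‖lam‖ * R := by
        gcongr
        · exact (norm_apply_le_matNorm _ i j).trans (hC₀ _ ha)
        · exact (norm_apply_le_matNorm _ i j).trans hb
        · exact hR c hc i j

end MatNorm

/-- If each `S_n` is norm bounded and for every `ε > 0` there is a sequence `(λ_n)` of positive
reals with `S_n ⊆ A_{n,ε} + λ_n K_n + M_n(ℂ1)` for every `n`, then each `S_n` is norm
relatively compact in `M_n(A)`. -/
theorem decomposition_imp_relatively_compact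
    (h1 : (1 : B) ∈ A) (hstar : ∀ a ∈ A, star a ∈ A) (hclosed : IsClosed (A : Set B))
    (K : ∀ r : ℕ, Set (Mat r ↥A)) (hK : IsMatrixMetricSet h1 hstar K)
    (S : ∀ n : ℕ, Set (Mat n ↥A)) (hS : Cond3 h1 K S) :
    Cond1 S := by
  intro n
  rcases subsingleton_or_nontrivial B with hB | hB
  · have : Subsingleton ↥A := ⟨fun x y => Subtype.ext (Subsingleton.elim _ _)⟩
    have : Subsingleton (Mat n ↥A) := inferInstanceAs (Subsingleton (Fin n → Fin n → ↥A))
    exact Set.subsingleton_of_subsingleton.isCompact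
  have : CompleteSpace ↥A := hclosed.completeSpace_coe
  refine (totallyBounded_of_forall_mem_nhds_zero_subset_add fun U hU => ?_).closure
    |>.isCompact_of_isClosed isClosed_closure
  obtain ⟨ε, hε, hεU⟩ := exists_setOf_matNorm_le_subset_of_mem_nhds hU
  obtain ⟨lam, -, hdec⟩ := hS.2 ε hε
  obtain ⟨C, hC, hSC⟩ :=
    exists_isCompact_subset_setOf_matNorm_le_add h1 (hS.1 n) (hK.compact n) (hdec n)
  exact ⟨C, hC.totallyBounded, hSC.trans (Set.add_subset_add_right hεU)⟩
end
end
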